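/- arXiv:math/0409220 — 2 statements merged into one kernel-verified Lean document; each statement's English description precedes it below -/
import Mathlib

section
/- For every radius r > 0 and every complex number w, the Carathéodory norm of w at the origin of the disk Δ_r equals (2/r)|w|; that is, the supremum, over all holomorphic maps f : Δ_r → Δ, of 2|f'(0)·w|/(1 − |f(0)|²) is exactly (2/r)|w|. -/
open Metric Set

/-- The Carathéodory norm of a tangent vector `w` at a point `p` of an open set
`X ⊆ ℂ`: the supremum over holomorphic maps `f : X → Δ` (the unit disk) of
`2‖f'(p)·w‖ / (1 - ‖f p‖²)`. -/
noncomputable def caraNormDisk (X : Set ℂ) (p w : ℂ) : ℝ :=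
  sSup {y : ℝ | ∃ f : ℂ → ℂ, DifferentiableOn ℂ f X ∧
    Set.MapsTo f X (Metric.ball (0 : ℂ) 1) ∧
    y = 2 * ‖deriv f p * w‖ / (1 - ‖f p‖ ^ 2)}

/-!
Since `z ↦ (z - c) / r` maps `Δ_r(c)` into `Δ` with derivative `1 / r` and value `0` at `c`, the
norm is at least `(2 / r)‖w‖`. Conversely, composing `f : Δ_r(c) → Δ` with the Möbius automorphism
of `Δ` sending `f c` to `0` and applying the Schwarz lemma gives the Schwarz–Pick bound
`‖f' c‖ ≤ (1 - ‖f c‖²) / r`, so that every quotient in the supremum is at most `(2 / r)‖w‖`.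
-/

open ComplexConjugate

namespace Complex

noncomputable def mobius (a z : ℂ) : ℂ := (z - a) / (1 - conj a * z)

variable {a z : ℂ}

lemma one_sub_norm_sq_pos (ha : ‖a‖ < 1) : 0 < 1 - ‖a‖ ^ 2 := by
  nlinarith [norm_nonneg a]

lemma one_sub_conj_mul_ne_zero (ha : ‖a‖ < 1) (hz : ‖z‖ < 1) : 1 - conj a * z ≠ 0 := by
  have : ‖conj a * z‖ < 1 := by
    rw [norm_mul, RCLike.norm_conj]
    nlinarith [norm_nonneg a, norm_nonneg z]
  intro h
  rw [← sub_eq_zero.1 h, norm_one] at this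
  exact this.false

lemma one_sub_conj_mul_self (a : ℂ) : 1 - conj a * a = ((1 - ‖a‖ ^ 2 : ℝ) : ℂ) := by
  rw [conj_mul']
  push_cast
  rfl

lemma normSq_one_sub_conj_mul_sub_normSq_sub (a z : ℂ) :
    normSq (1 - conj a * z) - normSq (z - a) = (1 - normSq a) * (1 - normSq z) := by
  simp only [normSq_apply, sub_re, sub_im, mul_re, mul_im, conj_re, conj_im, one_re, one_im]
  ring

lemma norm_mobius_lt_one (ha : ‖a‖ < 1) (hz : ‖z‖ < 1) : ‖mobius a z‖ < 1 := by
  rw [mobius, norm_div, div_lt_one (norm_pos_iff.2 (one_sub_conj_mul_ne_zero ha hz))]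
  have hnormSq := normSq_one_sub_conj_mul_sub_normSq_sub a z
  simp only [normSq_eq_norm_sq] at hnormSq
  have := mul_pos (one_sub_norm_sq_pos ha) (one_sub_norm_sq_pos hz)
  exact lt_of_pow_lt_pow_left₀ 2 (norm_nonneg _) (by linarith)

lemma mapsTo_mobius (ha : ‖a‖ < 1) : MapsTo (mobius a) (ball 0 1) (ball 0 1) := fun z hz => by
  rw [mem_ball_zero_iff] at hz ⊢
  exact norm_mobius_lt_one ha hz

lemma differentiableOn_mobius (ha : ‖a‖ < 1) : DifferentiableOn ℂ (mobius a) (ball 0 1) :=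
  fun z hz => DifferentiableAt.differentiableWithinAt <| by
    unfold mobius
    have := one_sub_conj_mul_ne_zero ha (mem_ball_zero_iff.1 hz)
    fun_prop (disch := assumption)

@[simp]
lemma mobius_self (a : ℂ) : mobius a a = 0 := by simp [mobius]

lemma hasDerivAt_mobius_self (ha : ‖a‖ < 1) :
    HasDerivAt (mobius a) ((1 - ‖a‖ ^ 2 : ℝ) : ℂ)⁻¹ a := by
  have hne := one_sub_conj_mul_ne_zero ha ha
  have hquot := ((hasDerivAt_id' a).sub_const a).fun_div
    (((hasDerivAt_id' a).const_mul (conj a)).const_sub 1) hne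
  refine hquot.congr_deriv ?_
  rw [← one_sub_conj_mul_self]
  field_simp
  ring

theorem norm_deriv_le_of_mapsTo_unitBall {f : ℂ → ℂ} {c : ℂ} {r : ℝ} (hr : 0 < r)
    (hd : DifferentiableOn ℂ f (ball c r)) (hf : MapsTo f (ball c r) (ball 0 1)) :
    ‖deriv f c‖ ≤ (1 - ‖f c‖ ^ 2) / r := by
  have ha : ‖f c‖ < 1 := mem_ball_zero_iff.1 (hf (mem_ball_self hr))
  have hpos := one_sub_norm_sq_pos ha
  have hg : HasDerivAt (mobius (f c) ∘ f) (((1 - ‖f c‖ ^ 2 : ℝ) : ℂ)⁻¹ * deriv f c) c :=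
    (hasDerivAt_mobius_self ha).comp c (hd.differentiableAt (ball_mem_nhds c hr)).hasDerivAt
  have hschwarz : ‖deriv (mobius (f c) ∘ f) c‖ ≤ 1 / r := by
    refine norm_deriv_le_div_of_mapsTo_ball ((differentiableOn_mobius ha).comp hd hf) ?_ hr
    rw [Function.comp_apply, mobius_self]
    exact ((mapsTo_mobius ha).comp hf).mono_right ball_subset_closedBall
  rw [hg.deriv, norm_mul, norm_inv, norm_real, Real.norm_of_nonneg hpos.le, inv_mul_le_iff₀ hpos]
    at hschwarz
  rwa [mul_one_div] at hschwarz

end Complex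

open Complex

lemma caraNormDisk_ball_self {c : ℂ} {r : ℝ} (hr : 0 < r) (w : ℂ) :
    caraNormDisk (ball c r) c w = 2 / r * ‖w‖ := by
  refine IsGreatest.csSup_eq ⟨⟨fun z => (z - c) / r, by fun_prop, fun z hz => ?_, ?_⟩, ?_⟩
  · rw [mem_ball_zero_iff, norm_div, norm_real, Real.norm_of_nonneg hr.le, div_lt_one hr,
      ← dist_eq_norm]
    exact hz
  · rw [(((hasDerivAt_id' c).sub_const c).div_const (r : ℂ)).deriv]
    simp only [norm_mul, norm_div, norm_one, norm_real, Real.norm_of_nonneg hr.le, sub_self,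
      zero_div, norm_zero]
    ring
  · rintro _ ⟨f, hd, hf, rfl⟩
    have hpos := one_sub_norm_sq_pos (mem_ball_zero_iff.1 (hf (mem_ball_self hr)))
    have hpick := norm_deriv_le_of_mapsTo_unitBall hr hd hf
    rw [div_le_iff₀ hpos, norm_mul]
    calc 2 * (‖deriv f c‖ * ‖w‖) ≤ 2 * ((1 - ‖f c‖ ^ 2) / r * ‖w‖) := by gcongr
      _ = 2 / r * ‖w‖ * (1 - ‖f c‖ ^ 2) := by ring

/-- For every `r > 0` and every `w : ℂ`, the Carathéodory norm of `w` at the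
origin of the disk `Δ_r` equals `(2/r)‖w‖`. -/
theorem caraNorm_ball_complex (r : ℝ) (hr : 0 < r) (w : ℂ) :
    caraNormDisk (Metric.ball (0 : ℂ) r) 0 w = (2 / r) * ‖w‖ :=
  caraNormDisk_ball_self hr w
end

section
/- Let n ≥ k ≥ 1 be integers. There exist positive constants c₁ and c₂, depending only on n and k, such that for all positive definite Hermitian n×n complex matrices A₁ and A₂ and every k×n complex matrix B of rank k, one has c₁ · (λ_{n−k+1}(A₁)⋯λ_n(A₁)) / (λ₁(A₂)⋯λ_k(A₂)) ≤ det(B A₁ B*) / det(B A₂ B*) ≤ c₂ · (λ₁(A₁)⋯λ_k(A₁)) / (λ_{n−k+1}(A₂)⋯λ_n(A₂)), where B* is the conjugate transpose of B. -/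
/-!
Diagonalise `A = U diag(μ) U*` and put `E = B U`. Then `det (B A B*)` and `det (B B*)` are the
values at `μ` and at `1` of the weighted Gram determinant `x ↦ det (E diag(x) E*)`, which is
nonnegative on the orthant, homogeneous of degree `k`, and affine in each `xᵢ` (changing one
weight is a rank-one update). A nonnegative affine function of one variable satisfies
`f t ≤ max t 1 * f 1` and `min t 1 * f 1 ≤ f t`; applied coordinatewise after dividing `μ` by the
threshold `λ_k` (resp. `λ_{n-k+1}`), this bounds `det (B A B*)` above by
`λ₁ ⋯ λ_k * det (B B*)` and below by `λ_{n-k+1} ⋯ λ_n * det (B B*)`. Dividing the bounds for `A₁`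
and `A₂` gives the theorem with `c₁ = c₂ = 1`.
-/

open Polynomial
open scoped ComplexOrder

open Finset Function Matrix

section Multiaffine

variable {ι : Type*} [DecidableEq ι]

def IsMultiaffine (g : (ι → ℝ) → ℝ) : Prop :=
  ∀ x i, ∃ a b : ℝ, ∀ t, g (update x i t) = a + b * t

theorem nonneg_and_nonneg_of_forall_add_mul_nonneg {a b : ℝ} (h : ∀ t, 0 ≤ t → 0 ≤ a + b * t) :
    0 ≤ a ∧ 0 ≤ b := by
  refine ⟨by simpa using h 0 le_rfl, ?_⟩
  by_contra! hb
  have := h ((a + 1) / -b) (div_nonneg (by linarith [h 0 le_rfl]) (by linarith))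
  rw [mul_div_assoc', div_neg, mul_div_cancel_left₀ _ hb.ne] at this
  linarith

namespace IsMultiaffine

variable {g : (ι → ℝ) → ℝ} {x : ι → ℝ}

theorem exists_nonneg_coeffs (hg : IsMultiaffine g) (hnn : ∀ x, 0 ≤ x → 0 ≤ g x) (hx : 0 ≤ x)
    (i : ι) : ∃ a b : ℝ, 0 ≤ a ∧ 0 ≤ b ∧ ∀ t, g (update x i t) = a + b * t := by
  obtain ⟨a, b, hab⟩ := hg x i
  have := nonneg_and_nonneg_of_forall_add_mul_nonneg fun t ht ↦
    hab t ▸ hnn _ (le_update_iff.2 ⟨ht, fun j _ ↦ hx j⟩)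
  exact ⟨a, b, this.1, this.2, hab⟩

theorem apply_update_le_max_mul (hg : IsMultiaffine g) (hnn : ∀ x, 0 ≤ x → 0 ≤ g x) (hx : 0 ≤ x)
    (i : ι) (t : ℝ) : g (update x i t) ≤ max t 1 * g (update x i 1) := by
  obtain ⟨a, b, ha, hb, hab⟩ := hg.exists_nonneg_coeffs hnn hx i
  rw [hab, hab]
  rcases le_total t 1 with h | h
  · rw [max_eq_right h]; nlinarith
  · rw [max_eq_left h]; nlinarith

theorem min_mul_le_apply_update (hg : IsMultiaffine g) (hnn : ∀ x, 0 ≤ x → 0 ≤ g x) (hx : 0 ≤ x)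
    (i : ι) (t : ℝ) : min t 1 * g (update x i 1) ≤ g (update x i t) := by
  obtain ⟨a, b, ha, hb, hab⟩ := hg.exists_nonneg_coeffs hnn hx i
  rw [hab, hab]
  rcases le_total t 1 with h | h
  · rw [min_eq_left h]; nlinarith
  · rw [min_eq_right h]; nlinarith

theorem apply_piecewise_one_le (hg : IsMultiaffine g) (hnn : ∀ x, 0 ≤ x → 0 ≤ g x) (hx : 0 ≤ x)
    (s : Finset ι) : g (s.piecewise x 1) ≤ (∏ i ∈ s, max (x i) 1) * g 1 := by
  induction s using Finset.induction_on with
  | empty => simp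
  | insert a s ha ih =>
    have hy : 0 ≤ s.piecewise x 1 := s.le_piecewise_of_le_of_le hx zero_le_one
    have hya : update (s.piecewise x 1) a 1 = s.piecewise x 1 :=
      update_eq_self_iff.2 (s.piecewise_eq_of_notMem x 1 ha).symm
    calc g ((insert a s).piecewise x 1)
        = g (update (s.piecewise x 1) a (x a)) := by rw [s.piecewise_insert]
      _ ≤ max (x a) 1 * g (s.piecewise x 1) := by
        simpa only [hya] using hg.apply_update_le_max_mul hnn hy a (x a)
      _ ≤ max (x a) 1 * ((∏ i ∈ s, max (x i) 1) * g 1) := by gcongr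
      _ = (∏ i ∈ insert a s, max (x i) 1) * g 1 := by rw [prod_insert ha, mul_assoc]

theorem prod_min_mul_le_apply_piecewise_one (hg : IsMultiaffine g) (hnn : ∀ x, 0 ≤ x → 0 ≤ g x)
    (hx : 0 ≤ x) (s : Finset ι) : (∏ i ∈ s, min (x i) 1) * g 1 ≤ g (s.piecewise x 1) := by
  induction s using Finset.induction_on with
  | empty => simp
  | insert a s ha ih =>
    have hy : 0 ≤ s.piecewise x 1 := s.le_piecewise_of_le_of_le hx zero_le_one
    have hya : update (s.piecewise x 1) a 1 = s.piecewise x 1 :=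
      update_eq_self_iff.2 (s.piecewise_eq_of_notMem x 1 ha).symm
    calc (∏ i ∈ insert a s, min (x i) 1) * g 1
        = min (x a) 1 * ((∏ i ∈ s, min (x i) 1) * g 1) := by rw [prod_insert ha, mul_assoc]
      _ ≤ min (x a) 1 * g (s.piecewise x 1) := by
        gcongr
        exact le_min (hx a) zero_le_one
      _ ≤ g (update (s.piecewise x 1) a (x a)) := by
        simpa only [hya] using hg.min_mul_le_apply_update hnn hy a (x a)
      _ = g ((insert a s).piecewise x 1) := by rw [s.piecewise_insert]

variable [Fintype ι]

theorem apply_le_prod_mul (hg : IsMultiaffine g) (hnn : ∀ x, 0 ≤ x → 0 ≤ g x) {k : ℕ}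
    (hhom : ∀ (c : ℝ) x, g (c • x) = c ^ k * g x) {s : Finset ι} (hs : #s = k) {c : ℝ}
    (hc : 0 < c) (hx : 0 ≤ x) (hsc : ∀ i ∈ s, c ≤ x i) (hcs : ∀ i ∉ s, x i ≤ c) :
    g x ≤ (∏ i ∈ s, x i) * g 1 := by
  set y := c⁻¹ • x
  have hy : 0 ≤ y := smul_nonneg (inv_nonneg.2 hc.le) hx
  have hprod : ∏ i, max (y i) 1 = (∏ i ∈ s, x i) / c ^ k := by
    rw [← prod_subset (subset_univ s) fun i _ hi ↦ max_eq_right ?_,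
      prod_congr rfl fun i hi ↦ max_eq_left ?_, ← hs, ← prod_const, ← prod_div_distrib]
    · simp [y, div_eq_inv_mul]
    · simpa [y, le_inv_mul_iff₀ hc] using hsc i hi
    · simpa [y, inv_mul_le_iff₀ hc] using hcs i hi
  calc g x = c ^ k * g y := by rw [← hhom, smul_inv_smul₀ hc.ne']
    _ ≤ c ^ k * ((∏ i, max (y i) 1) * g 1) := by
      gcongr
      simpa using hg.apply_piecewise_one_le hnn hy univ
    _ = (∏ i ∈ s, x i) * g 1 := by
      rw [hprod]
      field_simp

theorem prod_mul_le_apply (hg : IsMultiaffine g) (hnn : ∀ x, 0 ≤ x → 0 ≤ g x) {k : ℕ}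
    (hhom : ∀ (c : ℝ) x, g (c • x) = c ^ k * g x) {s : Finset ι} (hs : #s = k) {c : ℝ}
    (hc : 0 < c) (hx : 0 ≤ x) (hsc : ∀ i ∈ s, x i ≤ c) (hcs : ∀ i ∉ s, c ≤ x i) :
    (∏ i ∈ s, x i) * g 1 ≤ g x := by
  set y := c⁻¹ • x
  have hy : 0 ≤ y := smul_nonneg (inv_nonneg.2 hc.le) hx
  have hprod : ∏ i, min (y i) 1 = (∏ i ∈ s, x i) / c ^ k := by
    rw [← prod_subset (subset_univ s) fun i _ hi ↦ min_eq_right ?_,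
      prod_congr rfl fun i hi ↦ min_eq_left ?_, ← hs, ← prod_const, ← prod_div_distrib]
    · simp [y, div_eq_inv_mul]
    · simpa [y, inv_mul_le_iff₀ hc] using hsc i hi
    · simpa [y, le_inv_mul_iff₀ hc] using hcs i hi
  calc (∏ i ∈ s, x i) * g 1 = c ^ k * ((∏ i, min (y i) 1) * g 1) := by
        rw [hprod]
        field_simp
    _ ≤ c ^ k * g y := by
      gcongr
      simpa using hg.prod_min_mul_le_apply_piecewise_one hnn hy univ
    _ = g x := by rw [← hhom, smul_inv_smul₀ hc.ne']

end IsMultiaffine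
end Multiaffine

section Det

variable {m R : Type*} [Fintype m] [DecidableEq m] [CommRing R]

/-- `det (A + t u vᵀ)` is the determinant of the bordered matrix `[[A, -t u], [vᵀ, 1]]`, which is
linear in its last column. -/
theorem Matrix.det_add_smul_vecMulVec (A : Matrix m m R) (u v : m → R) (t : R) :
    (A + t • vecMulVec u v).det
      = A.det + t * (fromBlocks A (replicateCol Unit (-u)) (replicateRow Unit v) 0).det := by
  set M : Matrix (m ⊕ Unit) (m ⊕ Unit) R := fromBlocks A 0 (replicateRow Unit v) 1
  have hbordered : fromBlocks A (replicateCol Unit (-(t • u))) (replicateRow Unit v) 1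
      = M.updateCol (Sum.inr ()) ((fun i ↦ M i (Sum.inr ())) + t • Sum.elim (-u) 0) := by
    ext (i | i) (j | j) <;> simp [M]
  have hlast : M.updateCol (Sum.inr ()) (Sum.elim (-u) 0)
      = fromBlocks A (replicateCol Unit (-u)) (replicateRow Unit v) 0 := by
    ext (i | i) (j | j) <;> simp [M]
  have hM : M.det = A.det := by simp [M, det_fromBlocks_one₂₂]
  calc (A + t • vecMulVec u v).det
      = (A - replicateCol Unit (-(t • u)) * replicateRow Unit v).det := by
        rw [← vecMulVec_eq, ← smul_vecMulVec]; simp [sub_eq_add_neg]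
    _ = _ := by
      rw [← det_fromBlocks_one₂₂, hbordered, det_updateCol_add, updateCol_eq_self,
        det_updateCol_smul, hlast, hM]

end Det

section WeightedGramDet

variable {𝕜 m n : Type*} [RCLike 𝕜] [Fintype n] [DecidableEq n]

theorem Matrix.mul_diagonal_update_mul_conjTranspose (E : Matrix m n 𝕜) (d : n → 𝕜) (i : n)
    (t : 𝕜) : E * diagonal (update d i t) * Eᴴ
      = E * diagonal (update d i 0) * Eᴴ
        + t • vecMulVec (fun p ↦ E p i) (fun q ↦ star (E q i)) := by
  have hd : update d i t = fun j ↦ update d i 0 j + (Pi.single i t : n → 𝕜) j := by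
    ext j; rcases eq_or_ne j i with rfl | hj <;> simp [*]
  rw [hd, ← diagonal_add, Matrix.mul_add, Matrix.add_mul]
  congr 1
  ext p q
  rw [mul_apply]
  simp [mul_diagonal, Pi.single_apply, vecMulVec_apply, mul_comm, mul_assoc]

variable [Fintype m] [DecidableEq m]

noncomputable def weightedGramDet (E : Matrix m n 𝕜) (x : n → ℝ) : ℝ :=
  RCLike.re (E * diagonal (fun j ↦ (x j : 𝕜)) * Eᴴ).det

variable (E : Matrix m n 𝕜)

theorem isMultiaffine_weightedGramDet : IsMultiaffine (weightedGramDet E) := by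
  intro x i
  set M := E * diagonal (update (fun j ↦ (x j : 𝕜)) i 0) * Eᴴ
  refine ⟨RCLike.re M.det, RCLike.re (fromBlocks M (replicateCol Unit (-fun p ↦ E p i))
    (replicateRow Unit fun q ↦ star (E q i)) 0).det, fun t ↦ ?_⟩
  have hcast :
      (fun j ↦ ((update x i t j : ℝ) : 𝕜)) = update (fun j ↦ (x j : 𝕜)) i (t : 𝕜) := by
    funext j; rcases eq_or_ne j i with rfl | hj <;> simp [*]
  rw [weightedGramDet, hcast, mul_diagonal_update_mul_conjTranspose, det_add_smul_vecMulVec,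
    map_add, RCLike.re_ofReal_mul, mul_comm]

theorem weightedGramDet_nonneg {x : n → ℝ} (hx : 0 ≤ x) : 0 ≤ weightedGramDet E x := by
  have hd : (diagonal fun j ↦ (x j : 𝕜)).PosSemidef :=
    PosSemidef.diagonal fun j ↦ RCLike.ofReal_nonneg.2 (hx j)
  exact (RCLike.nonneg_iff.1 (hd.mul_mul_conjTranspose_same E).det_nonneg).1

theorem weightedGramDet_smul (c : ℝ) (x : n → ℝ) :
    weightedGramDet E (c • x) = c ^ Fintype.card m * weightedGramDet E x := by
  have hd : diagonal (fun j ↦ ((c • x) j : 𝕜)) = (c : 𝕜) • diagonal fun j ↦ (x j : 𝕜) := by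
    rw [← diagonal_smul]; congr 1; funext j; simp
  rw [weightedGramDet, hd, Matrix.mul_smul, Matrix.smul_mul, det_smul, ← RCLike.ofReal_pow,
    RCLike.re_ofReal_mul, weightedGramDet]

theorem weightedGramDet_one : weightedGramDet E 1 = RCLike.re (E * Eᴴ).det := by
  simp [weightedGramDet]

end WeightedGramDet

section Spectral

variable {𝕜 m n : Type*} [RCLike 𝕜] [Fintype n] [DecidableEq n] {A : Matrix n n 𝕜} {μ : n → ℝ}

theorem Matrix.IsHermitian.exists_unitary_eq_mul_diagonal_mul_star (hA : A.IsHermitian)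
    (hμ : A.charpoly = ∏ i, (X - C (μ i : 𝕜))) :
    ∃ U : unitaryGroup n 𝕜, A = U * diagonal (fun i ↦ (μ i : 𝕜)) * star (U : Matrix n n 𝕜) := by
  have hD : (diagonal fun i ↦ (μ i : 𝕜)).IsHermitian :=
    isHermitian_diagonal_of_self_adjoint _ (funext fun i ↦ RCLike.conj_ofReal _)
  have heig : hA.eigenvalues = hD.eigenvalues :=
    (hA.eigenvalues_eq_eigenvalues_iff hD).2 (by rw [hμ, charpoly_diagonal])
  have hspec := hA.spectral_theorem
  rw [heig, ← hD.conjStarAlgAut_star_eigenvectorUnitary, ← Unitary.conjStarAlgAut_mul_apply,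
    Unitary.conjStarAlgAut_apply] at hspec
  exact ⟨_, hspec⟩

theorem Matrix.PosDef.pos_of_charpoly_eq (hA : A.PosDef)
    (hμ : A.charpoly = ∏ i, (X - C (μ i : 𝕜))) (i : n) : 0 < μ i := by
  obtain ⟨U, hU⟩ := hA.isHermitian.exists_unitary_eq_mul_diagonal_mul_star hμ
  have hUU : star (U : Matrix n n 𝕜) * U = 1 := Unitary.coe_star_mul_self U
  have hdiag : (U : Matrix n n 𝕜)ᴴ * A * U = diagonal fun i ↦ (μ i : 𝕜) := by
    rw [hU, ← star_eq_conjTranspose]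
    simp only [← Matrix.mul_assoc, hUU, Matrix.one_mul]
    rw [Matrix.mul_assoc, hUU, Matrix.mul_one]
  have hpos := hA.conjTranspose_mul_mul_same (B := (U : Matrix n n 𝕜))
    (mulVec_injective_of_isUnit Unitary.isUnit_coe)
  rw [hdiag, posDef_diagonal_iff] at hpos
  exact RCLike.ofReal_pos.1 (hpos i)

theorem Matrix.IsHermitian.exists_mul_diagonal_mul_conjTranspose (hA : A.IsHermitian)
    (hμ : A.charpoly = ∏ i, (X - C (μ i : 𝕜))) (B : Matrix m n 𝕜) :
    ∃ E : Matrix m n 𝕜,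
      B * A * Bᴴ = E * diagonal (fun i ↦ (μ i : 𝕜)) * Eᴴ ∧ B * Bᴴ = E * Eᴴ := by
  obtain ⟨U, hU⟩ := hA.exists_unitary_eq_mul_diagonal_mul_star hμ
  refine ⟨B * (U : Matrix n n 𝕜), ?_, ?_⟩
  · rw [hU, conjTranspose_mul, star_eq_conjTranspose]
    simp only [Matrix.mul_assoc]
  · rw [conjTranspose_mul, Matrix.mul_assoc, ← Matrix.mul_assoc (U : Matrix n n 𝕜),
      ← star_eq_conjTranspose, Unitary.mul_star_self_of_mem U.2, Matrix.one_mul]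

end Spectral

section PosDef

variable {𝕜 m n : Type*} [RCLike 𝕜] [Fintype n]

theorem Matrix.mulVec_injective_of_rank_eq {A : Matrix m n 𝕜} (hA : A.rank = Fintype.card n) :
    Function.Injective A.mulVec := by
  have h := LinearMap.finrank_range_add_finrank_ker A.mulVecLin
  rw [← rank, hA, Module.finrank_fintype_fun_eq_card, add_eq_left, Submodule.finrank_eq_zero,
    LinearMap.ker_eq_bot] at h
  exact h

theorem Matrix.PosDef.mul_mul_conjTranspose_of_rank_eq [Fintype m] [DecidableEq m]
    {A : Matrix n n 𝕜} (hA : A.PosDef) {B : Matrix m n 𝕜} (hB : B.rank = Fintype.card m) :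
    (B * A * Bᴴ).PosDef := by
  simpa using hA.conjTranspose_mul_mul_same (B := Bᴴ)
    (mulVec_injective_of_rank_eq (by rw [rank_conjTranspose, hB]))

theorem Matrix.PosDef.re_det_pos [DecidableEq n] {A : Matrix n n 𝕜} (hA : A.PosDef) :
    0 < RCLike.re A.det :=
  (RCLike.pos_iff.1 hA.det_pos).1

end PosDef

section EigenvalueBounds

variable {𝕜 : Type*} [RCLike 𝕜] {k n : ℕ} {A : Matrix (Fin n) (Fin n) 𝕜} {μ : Fin n → ℝ}

theorem Matrix.PosDef.re_det_mul_mul_conjTranspose_le (hA : A.PosDef) (hμ : Antitone μ)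
    (hchar : A.charpoly = ∏ i, (X - C (μ i : 𝕜))) (hk : 1 ≤ k) (hkn : k ≤ n)
    (B : Matrix (Fin k) (Fin n) 𝕜) :
    RCLike.re (B * A * Bᴴ).det ≤ (∏ i : Fin k, μ ⟨i, by omega⟩) * RCLike.re (B * Bᴴ).det := by
  obtain ⟨E, hBA, hBB⟩ := hA.isHermitian.exists_mul_diagonal_mul_conjTranspose hchar B
  have hpos := hA.pos_of_charpoly_eq hchar
  rw [hBA, hBB, ← weightedGramDet_one]
  refine ((isMultiaffine_weightedGramDet E).apply_le_prod_mul
    (fun _ ↦ weightedGramDet_nonneg E) (fun c x ↦ by rw [weightedGramDet_smul, Fintype.card_fin])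
    (s := univ.map (Fin.castLEEmb hkn)) (by simp) (hpos ⟨k - 1, by omega⟩) (fun i ↦ (hpos i).le)
    ?_ ?_).trans_eq ?_
  · simp only [mem_map, mem_univ, true_and, forall_exists_index, forall_apply_eq_imp_iff]
    exact fun j ↦ hμ (Fin.le_def.2 (by simp; omega))
  · intro i hi
    refine hμ (Fin.le_def.2 (show k - 1 ≤ i from ?_))
    by_contra! h
    exact hi (mem_map_of_mem _ (mem_univ (⟨i, by omega⟩ : Fin k)))
  · rw [prod_map]
    rfl

theorem Matrix.PosDef.le_re_det_mul_mul_conjTranspose (hA : A.PosDef) (hμ : Antitone μ)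
    (hchar : A.charpoly = ∏ i, (X - C (μ i : 𝕜))) (hk : 1 ≤ k) (hkn : k ≤ n)
    (B : Matrix (Fin k) (Fin n) 𝕜) :
    (∏ i : Fin k, μ ⟨n - k + i, by omega⟩) * RCLike.re (B * Bᴴ).det
      ≤ RCLike.re (B * A * Bᴴ).det := by
  obtain ⟨E, hBA, hBB⟩ := hA.isHermitian.exists_mul_diagonal_mul_conjTranspose hchar B
  have hpos := hA.pos_of_charpoly_eq hchar
  rw [hBA, hBB, ← weightedGramDet_one]
  refine le_of_eq_of_le ?_ ((isMultiaffine_weightedGramDet E).prod_mul_le_apply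
    (fun _ ↦ weightedGramDet_nonneg E) (fun c x ↦ by rw [weightedGramDet_smul, Fintype.card_fin])
    (s := univ.map (Fin.natAdd_castLEEmb hkn)) (by simp) (hpos ⟨n - k, by omega⟩)
    (fun i ↦ (hpos i).le) ?_ ?_)
  · rw [prod_map]
    congr 1
    exact prod_congr rfl fun i _ ↦ congrArg μ (Fin.ext (by simp; omega))
  · simp only [mem_map, mem_univ, true_and, forall_exists_index, forall_apply_eq_imp_iff]
    exact fun j ↦ hμ (Fin.le_def.2 (by simp))
  · intro i hi
    refine hμ (Fin.le_def.2 (show (i : ℕ) ≤ n - k from ?_))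
    by_contra! h
    have : i ∈ Set.range (Fin.natAdd_castLEEmb hkn) := by
      rw [Fin.range_natAdd_castLEEmb]; exact h.le
    obtain ⟨j, rfl⟩ := this
    exact hi (mem_map_of_mem _ (mem_univ j))

end EigenvalueBounds

/-- Let `n ≥ k ≥ 1`. There are positive constants `c₁, c₂` depending only on
`n` and `k` such that for all positive definite Hermitian matrices `A₁, A₂`
with eigenvalues listed in decreasing order as `μ₁, μ₂` (so that the
characteristic polynomial of `Aⱼ` is `∏ i, (X - μⱼ i)` and `μⱼ` is antitone),
and every `k × n` matrix `B` of rank `k`,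
`c₁ (λ_{n-k+1}(A₁)⋯λ_n(A₁))/(λ₁(A₂)⋯λ_k(A₂)) ≤ det(BA₁B*)/det(BA₂B*) ≤
c₂ (λ₁(A₁)⋯λ_k(A₁))/(λ_{n-k+1}(A₂)⋯λ_n(A₂))`. -/
theorem det_ratio_eigenvalue_bounds (n k : ℕ) (hk : 1 ≤ k) (hkn : k ≤ n) :
    ∃ c₁ c₂ : ℝ, 0 < c₁ ∧ 0 < c₂ ∧
      ∀ (A₁ A₂ : Matrix (Fin n) (Fin n) ℂ) (μ₁ μ₂ : Fin n → ℝ)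
        (B : Matrix (Fin k) (Fin n) ℂ),
        A₁.PosDef → A₂.PosDef →
        Antitone μ₁ → Antitone μ₂ →
        A₁.charpoly = ∏ i, (X - C (μ₁ i : ℂ)) →
        A₂.charpoly = ∏ i, (X - C (μ₂ i : ℂ)) →
        B.rank = k →
        c₁ * (∏ i : Fin k, μ₁ ⟨n - k + i.val, by omega⟩) /
            (∏ i : Fin k, μ₂ ⟨i.val, by omega⟩)
          ≤ (B * A₁ * B.conjTranspose).det.re / (B * A₂ * B.conjTranspose).det.re ∧
        (B * A₁ * B.conjTranspose).det.re / (B * A₂ * B.conjTranspose).det.re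
          ≤ c₂ * (∏ i : Fin k, μ₁ ⟨i.val, by omega⟩) /
            (∏ i : Fin k, μ₂ ⟨n - k + i.val, by omega⟩) := by
  refine ⟨1, 1, one_pos, one_pos, fun A₁ A₂ μ₁ μ₂ B hA₁ hA₂ hμ₁ hμ₂ hc₁ hc₂ hB ↦ ?_⟩
  replace hB : B.rank = Fintype.card (Fin k) := hB.trans (Fintype.card_fin k).symm
  have hBB : 0 < (B * Bᴴ).det.re := by
    simpa using (PosDef.one.mul_mul_conjTranspose_of_rank_eq hB).re_det_pos
  have hBA₁ := (hA₁.mul_mul_conjTranspose_of_rank_eq hB).re_det_pos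
  have hBA₂ := (hA₂.mul_mul_conjTranspose_of_rank_eq hB).re_det_pos
  have hpos₁ := hA₁.pos_of_charpoly_eq hc₁
  have hpos₂ := hA₂.pos_of_charpoly_eq hc₂
  have lower₁ := hA₁.le_re_det_mul_mul_conjTranspose hμ₁ hc₁ hk hkn B
  have upper₁ := hA₁.re_det_mul_mul_conjTranspose_le hμ₁ hc₁ hk hkn B
  have lower₂ := hA₂.le_re_det_mul_mul_conjTranspose hμ₂ hc₂ hk hkn B
  have upper₂ := hA₂.re_det_mul_mul_conjTranspose_le hμ₂ hc₂ hk hkn B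
  rw [one_mul, one_mul]
  constructor
  · calc _ = _ := (mul_div_mul_right _ _ hBB.ne').symm
      _ ≤ _ := div_le_div₀ hBA₁.le lower₁ hBA₂ upper₂
  · calc _ ≤ _ := div_le_div₀ (mul_nonneg (prod_nonneg fun i _ ↦ (hpos₁ _).le) hBB.le) upper₁
          (mul_pos (prod_pos fun i _ ↦ hpos₂ _) hBB) lower₂
      _ = _ := mul_div_mul_right _ _ hBB.ne'
end
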